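/- arXiv:2408.00314 — 4 statements merged into one kernel-verified Lean document; each statement's English description precedes it below -/
import Mathlib

section
/- Lemma 1. Assume |Q_i| ≤ 1 for every i = 1, …, t. Then for every k with 1 ≤ k ≤ t, the difference d_k = b_k − a_k between the elementary symmetric quantities built from the estimates and from the true power sums satisfies |d_k| ≤ Σ_{j=1}^k |ε_j| / j. -/
/-!
Both `b` and `a` obey the Newton–Girard recursion
`n x_n = ∑_{i=1}^n (-1)^(i-1) x_(n-i) y_i`, with `y = Q` for `b` and, by Newton's identities,
`y = P` for `a`. Subtracting, the error `d_n = b_n - a_n` satisfies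
`n d_n = ∑ (-1)^(i-1) (d_(n-i) Q_i + a_(n-i) ε_i)`, and with `|Q_i| ≤ 1`, `|a_m| ≤ (∑ p)^m = 1`
this gives `n |d_n| ≤ ∑_{i=1}^n (|d_(n-i)| + |ε_i|)`. The bound `c_n = ∑_{j ≤ n} |ε_j| / j`
satisfies this recursion with equality, so `|d_n| ≤ c_n` by strong induction.
-/

open Finset

theorem Multiset.esymm_cons_succ {R : Type*} [CommSemiring R] (x : R) (s : Multiset R) (n : ℕ) :
    (x ::ₘ s).esymm (n + 1) = s.esymm (n + 1) + x * s.esymm n := by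
  simp [Multiset.esymm, Multiset.powersetCard_cons, Multiset.map_map,
    Multiset.sum_map_mul_left]

theorem Multiset.esymm_le_sum_pow {R : Type*} [CommSemiring R] [PartialOrder R] [IsOrderedRing R]
    {s : Multiset R} (hs : ∀ x ∈ s, 0 ≤ x) (n : ℕ) : s.esymm n ≤ s.sum ^ n := by
  induction s using Multiset.induction_on generalizing n with
  | empty => cases n <;> simp [Multiset.esymm, Multiset.powersetCard_zero_right]
  | cons x s ih =>
    have hx : 0 ≤ x := hs x (Multiset.mem_cons_self x s)
    have hs' : ∀ y ∈ s, 0 ≤ y := fun y hy => hs y (Multiset.mem_cons_of_mem hy)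
    have hsum : 0 ≤ s.sum := Multiset.sum_nonneg hs'
    cases n with
    | zero => simp [Multiset.esymm]
    | succ n =>
      calc (x ::ₘ s).esymm (n + 1) = s.esymm (n + 1) + x * s.esymm n := s.esymm_cons_succ x n
        _ ≤ s.sum ^ (n + 1) + x * s.sum ^ n := by gcongr <;> exact ih hs' _
        _ = (s.sum + x) * s.sum ^ n := by ring
        _ ≤ (x + s.sum) * (x + s.sum) ^ n := by
          rw [add_comm x]; gcongr; exact le_add_of_nonneg_right hx
        _ = (x ::ₘ s).sum ^ (n + 1) := by rw [Multiset.sum_cons, pow_succ']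

theorem MvPolynomial.mul_esymm_eq_sum_Icc (σ R : Type*) [Fintype σ] [CommRing R] (k : ℕ) :
    k * esymm σ R k = ∑ i ∈ Icc 1 k, (-1) ^ (i - 1) * esymm σ R (k - i) * psum σ R i := by
  rw [mul_esymm_eq_sum, mul_sum]
  refine sum_nbij' Prod.snd (fun i => (k - i, i)) ?_ ?_ ?_ ?_ ?_
  · intro x hx
    simp only [mem_filter, HasAntidiagonal.mem_antidiagonal, mem_Icc] at hx ⊢
    omega
  · intro i hi
    simp only [mem_filter, HasAntidiagonal.mem_antidiagonal, mem_Icc] at hi ⊢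
    omega
  · intro x hx
    simp only [mem_filter, HasAntidiagonal.mem_antidiagonal] at hx
    exact Prod.ext (by dsimp only; omega) rfl
  · intro i _
    rfl
  · rintro ⟨j, i⟩ hx
    simp only [mem_filter, HasAntidiagonal.mem_antidiagonal] at hx
    obtain rfl : j = k - i := by omega
    -- the two exponents of `-1` differ by the even number `2 * (k - i + 1)`
    rw [← mul_assoc, ← mul_assoc, ← pow_add,
      show k + 1 + (k - i) = i - 1 + 2 * (k - i + 1) by omega, pow_add, pow_mul]
    simp

theorem sum_Icc_sub_eq_sum_range {M : Type*} [AddCommMonoid M] (f : ℕ → M) (n : ℕ) :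
    ∑ i ∈ Icc 1 n, f (n - i) = ∑ m ∈ range n, f m := by
  rw [← Ico_add_one_right_eq_Icc, sum_Ico_reflect f 1 le_rfl, range_eq_Ico]
  simp

theorem sum_Icc_sum_Icc_sub_div_add_eq_mul (E : ℕ → ℝ) (n : ℕ) :
    ∑ i ∈ Icc 1 n, (∑ j ∈ Icc 1 (n - i), E j / j + E i) = n * ∑ j ∈ Icc 1 n, E j / j := by
  rw [sum_add_distrib, sum_Icc_sub_eq_sum_range (fun m => ∑ j ∈ Icc 1 m, E j / j)]
  induction n with
  | zero => simp
  | succ n ih =>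
    rw [sum_range_succ, sum_Icc_succ_top (by omega), sum_Icc_succ_top (by omega)]
    have : ((n : ℝ) + 1) ≠ 0 := by positivity
    push_cast
    field_simp
    linear_combination ih

def newtonGirard {R : Type*} [CommRing R] (x y : ℕ → R) (n : ℕ) : R :=
  ∑ i ∈ Icc 1 n, (-1) ^ (i - 1) * x (n - i) * y i

theorem newtonGirard_sub_newtonGirard {R : Type*} [CommRing R] (x y x' y' : ℕ → R) (n : ℕ) :
    newtonGirard x y n - newtonGirard x' y' n =
      ∑ i ∈ Icc 1 n,
        (-1) ^ (i - 1) * ((x (n - i) - x' (n - i)) * y i + x' (n - i) * (y i - y' i)) := by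
  rw [newtonGirard, newtonGirard, ← sum_sub_distrib]
  exact sum_congr rfl fun i _ => by ring

theorem abs_sub_le_of_mul_eq_newtonGirard {t : ℕ} {a b P Q : ℕ → ℝ}
    (ha0 : a 0 = 1) (hb0 : b 0 = 1) (ha_le : ∀ m, |a m| ≤ 1) (hQ : ∀ i, 1 ≤ i → i ≤ t → |Q i| ≤ 1)
    (ha : ∀ n, 1 ≤ n → n ≤ t → n * a n = newtonGirard a P n)
    (hb : ∀ n, 1 ≤ n → n ≤ t → n * b n = newtonGirard b Q n) :
    ∀ n ≤ t, |b n - a n| ≤ ∑ j ∈ Icc 1 n, |Q j - P j| / j := by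
  refine fun n => Nat.strong_induction_on n fun n ih hnt => ?_
  rcases Nat.eq_zero_or_pos n with rfl | hn
  · simp [ha0, hb0]
  set E : ℕ → ℝ := fun j => |Q j - P j|
  have hterm : ∀ i ∈ Icc 1 n,
      |(-1) ^ (i - 1) * ((b (n - i) - a (n - i)) * Q i + a (n - i) * (Q i - P i))| ≤
        ∑ j ∈ Icc 1 (n - i), E j / j + E i := by
    intro i hi
    rw [mem_Icc] at hi
    have hd := ih (n - i) (by omega) (by omega)
    have hQi := hQ i hi.1 (by omega)
    calc |(-1) ^ (i - 1) * ((b (n - i) - a (n - i)) * Q i + a (n - i) * (Q i - P i))|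
        ≤ |b (n - i) - a (n - i)| * |Q i| + |a (n - i)| * E i := by
          rw [abs_mul, abs_pow, abs_neg, abs_one, one_pow, one_mul, ← abs_mul, ← abs_mul]
          exact abs_add_le _ _
      _ ≤ (∑ j ∈ Icc 1 (n - i), E j / j) * 1 + 1 * E i := by
          gcongr
          exact ha_le _
      _ = ∑ j ∈ Icc 1 (n - i), E j / j + E i := by ring
  have hn' : (0 : ℝ) < n := by exact_mod_cast hn
  refine le_of_mul_le_mul_left ?_ hn'
  calc n * |b n - a n| = |newtonGirard b Q n - newtonGirard a P n| := by
        rw [← hb n hn hnt, ← ha n hn hnt, ← mul_sub, abs_mul, abs_of_pos hn']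
    _ ≤ ∑ i ∈ Icc 1 n, (∑ j ∈ Icc 1 (n - i), E j / j + E i) := by
        rw [newtonGirard_sub_newtonGirard]
        exact (abs_sum_le_sum_abs _ _).trans (sum_le_sum hterm)
    _ = n * ∑ j ∈ Icc 1 n, E j / j := sum_Icc_sum_Icc_sub_div_add_eq_mul E n

theorem elementary_symmetric_error_bound_general
    (r t : ℕ)
    (p : Fin r → ℝ) (hp : ∀ j, 0 ≤ p j) (hpsum : ∑ j, p j = 1)
    (P : ℕ → ℝ) (hP : ∀ i, 1 ≤ i → P i = ∑ j, p j ^ i)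
    (a : ℕ → ℝ)
    (ha : ∀ n, a n = ∑ S ∈ Finset.powersetCard n (Finset.univ : Finset (Fin r)),
      ∏ j ∈ S, p j)
    (Q b : ℕ → ℝ) (hb0 : b 0 = 1)
    (hb : ∀ n, 1 ≤ n → n ≤ t →
      b n = (1 / (n : ℝ)) * ∑ i ∈ Icc 1 n, (-1 : ℝ) ^ (i - 1) * b (n - i) * Q i)
    (hQbd : ∀ i, 1 ≤ i → i ≤ t → |Q i| ≤ 1) :
    ∀ n, 1 ≤ n → n ≤ t → |b n - a n| ≤ ∑ j ∈ Icc 1 n, |Q j - P j| / (j : ℝ) := by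
  have ha_esymm : ∀ n, a n = MvPolynomial.eval p (MvPolynomial.esymm (Fin r) ℝ n) := fun n => by
    simp [ha, MvPolynomial.esymm]
  have ha_le : ∀ m, |a m| ≤ 1 := fun m => by
    have hnonneg : 0 ≤ a m := by
      rw [ha]; exact sum_nonneg fun S _ => prod_nonneg fun j _ => hp j
    have hle : a m ≤ 1 := by
      have h := Multiset.esymm_le_sum_pow (s := univ.val.map p)
        (fun x hx => by obtain ⟨j, -, rfl⟩ := Multiset.mem_map.1 hx; exact hp j) m
      rwa [Finset.esymm_map_val, Finset.sum_map_val, hpsum, one_pow, ← ha] at h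
    exact abs_le.2 ⟨by linarith, hle⟩
  have ha_newton : ∀ n, 1 ≤ n → n ≤ t → n * a n = newtonGirard a P n := fun n _ _ => by
    have := congrArg (MvPolynomial.eval p) (MvPolynomial.mul_esymm_eq_sum_Icc (Fin r) ℝ n)
    simp only [map_mul, map_sum, map_pow, map_neg, map_one, map_natCast] at this
    rw [ha_esymm, this, newtonGirard]
    refine sum_congr rfl fun i hi => ?_
    rw [ha_esymm, hP i (mem_Icc.1 hi).1]
    simp [MvPolynomial.psum]
  have hb_newton : ∀ n, 1 ≤ n → n ≤ t → n * b n = newtonGirard b Q n := fun n hn hnt => by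
    have : (n : ℝ) ≠ 0 := by positivity
    rw [hb n hn hnt, newtonGirard]
    field_simp
  intro n _ hnt
  exact abs_sub_le_of_mul_eq_newtonGirard (by simp [ha]) hb0 ha_le hQbd ha_newton hb_newton n hnt

/-- **Lemma 1.** If `|Q i| ≤ 1` for `i = 1, …, t`, then the difference
`d k = b k - a k` between the Newton–Girard quantities built from the
estimates and the true elementary symmetric polynomials satisfies
`|d k| ≤ ∑_{j=1}^k |ε j| / j`, where `ε j = Q j - P j`. -/
theorem elementary_symmetric_error_bound
    (r t : ℕ) (hr : 1 ≤ r) (ht : 1 ≤ t)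
    (p : Fin r → ℝ) (hp : ∀ j, 0 ≤ p j) (hpsum : ∑ j, p j = 1)
    (P : ℕ → ℝ) (hP : ∀ i, 1 ≤ i → P i = ∑ j, p j ^ i)
    (a : ℕ → ℝ)
    (ha : ∀ n, a n = ∑ S ∈ Finset.powersetCard n (Finset.univ : Finset (Fin r)),
      ∏ j ∈ S, p j)
    (Q b : ℕ → ℝ) (hb0 : b 0 = 1)
    (hb : ∀ n, 1 ≤ n → n ≤ t →
      b n = (1 / (n : ℝ)) * ∑ i ∈ Icc 1 n, (-1 : ℝ) ^ (i - 1) * b (n - i) * Q i)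
    (hQbd : ∀ i, 1 ≤ i → i ≤ t → |Q i| ≤ 1) :
    ∀ n, 1 ≤ n → n ≤ t → |b n - a n| ≤ ∑ j ∈ Icc 1 n, |Q j - P j| / (j : ℝ) :=
  elementary_symmetric_error_bound_general r t p hp hpsum P hP a ha Q b hb0 hb hQbd
end

section
/- Truncated Newton identity (closed form of the recursion defect): let p_1, …, p_r be arbitrary real numbers, with power sums P_i = Σ_{j=1}^r p_j^i and elementary symmetric polynomials a_i (a_i = 0 for i > r). Then for all integers t ≥ 1 and k ≥ 1, Σ_{i=1}^t (−1)^{i−1} a_i P_{t+k−i} − P_{t+k} = (−1)^{t−1} Σ_{S ⊆ {1,…,r}, |S| = t+1} Σ_{j ∈ S} p_j^k ∏_{i ∈ S, i ≠ j} p_i. -/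
/-!
With `h n k = ∑_{#S = n} ∑_{j ∈ S} p j ^ k ∏_{i ∈ S \ {j}} p i`, sorting the terms of
`e n * P k = ∑_{#S = n} ∑_j (∏_{i ∈ S} p i) * p j ^ k` by whether `j ∈ S` gives
`e n * P k = h n (k + 1) + h (n + 1) k`, and `h 1 k = P k`. Substituting this into the alternating
sum makes it telescope, leaving only `± h (t + 1) k`.
-/

open Finset

variable {R ι : Type*} [CommRing R] [Fintype ι] [DecidableEq ι]

/-- For `k ≥ 2` this is the monomial symmetric function `m_(k, 1^(n-1))` of a hook partition,
evaluated at `p`. -/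
def hookSum (p : ι → R) (n k : ℕ) : R :=
  ∑ S ∈ powersetCard n (univ : Finset ι), ∑ j ∈ S, p j ^ k * ∏ i ∈ S.erase j, p i

theorem hookSum_one (p : ι → R) (k : ℕ) : hookSum p 1 k = ∑ j, p j ^ k := by
  simp [hookSum, powersetCard_one]

/-- Adjoining a new index `j ∉ S` to `S` is a bijection onto the pairs `j ∈ T` with `#T = n + 1`. -/
theorem hookSum_succ_eq_sum_sdiff (p : ι → R) (n k : ℕ) :
    hookSum p (n + 1) k =
      ∑ S ∈ powersetCard n (univ : Finset ι), ∑ j ∈ univ \ S, (∏ i ∈ S, p i) * p j ^ k := by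
  rw [hookSum, sum_sigma', sum_sigma']
  refine sum_nbij' (fun x => ⟨x.1.erase x.2, x.2⟩) (fun x => ⟨insert x.2 x.1, x.2⟩)
    ?_ ?_ ?_ ?_ ?_
  · rintro ⟨T, j⟩ hT
    simp only [mem_sigma, mem_powersetCard, mem_sdiff] at hT ⊢
    exact ⟨⟨subset_univ _, by rw [card_erase_of_mem hT.2, hT.1.2]; rfl⟩, mem_univ _,
      notMem_erase _ _⟩
  · rintro ⟨S, j⟩ hS
    simp only [mem_sigma, mem_powersetCard, mem_sdiff] at hS ⊢
    exact ⟨⟨subset_univ _, by rw [card_insert_of_notMem hS.2.2, hS.1.2]⟩, mem_insert_self _ _⟩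
  · rintro ⟨T, j⟩ hT
    simp [insert_erase (mem_sigma.1 hT).2]
  · rintro ⟨S, j⟩ hS
    simp [erase_insert (mem_sdiff.1 (mem_sigma.1 hS).2).2]
  · rintro ⟨T, j⟩ -
    simp only [mul_comm]

theorem esymm_mul_powerSum_eq_hookSum_add (p : ι → R) (n k : ℕ) :
    (∑ S ∈ powersetCard n (univ : Finset ι), ∏ i ∈ S, p i) * ∑ j, p j ^ k =
      hookSum p n (k + 1) + hookSum p (n + 1) k := by
  rw [hookSum_succ_eq_sum_sdiff, hookSum, ← sum_add_distrib, sum_mul]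
  refine sum_congr rfl fun S _ => ?_
  rw [mul_sum, ← sum_sdiff (subset_univ S), add_comm]
  congr 1
  refine sum_congr rfl fun j hj => ?_
  rw [← mul_prod_erase S p hj]
  ring

theorem sum_Icc_esymm_mul_powerSum_sub_powerSum (p : ι → R) (t k : ℕ) :
    ∑ i ∈ Icc 1 (t + 1), (-1 : R) ^ (i - 1) *
        (∑ S ∈ powersetCard i (univ : Finset ι), ∏ j ∈ S, p j) * ∑ j, p j ^ (t + 1 + k - i)
      - ∑ j, p j ^ (t + 1 + k) = (-1) ^ t * hookSum p (t + 2) k := by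
  induction t generalizing k with
  | zero =>
    rw [Icc_self, sum_singleton, Nat.sub_self, pow_zero, one_mul, Nat.add_sub_cancel_left,
      esymm_mul_powerSum_eq_hookSum_add, hookSum_one, zero_add, add_comm 1 k]
    ring
  | succ t ih =>
    have hshift : ∀ i ∈ Icc 1 (t + 1), t + 1 + 1 + k - i = t + 1 + (k + 1) - i := by
      intro i _; omega
    rw [sum_Icc_succ_top (by omega), sum_congr rfl fun i hi => by rw [hshift i hi],
      show t + 1 + 1 + k - (t + 1 + 1) = k by omega, show t + 1 + 1 + k = t + 1 + (k + 1) by omega,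
      mul_assoc _ _ (∑ j, p j ^ k), esymm_mul_powerSum_eq_hookSum_add, add_sub_right_comm, ih,
      Nat.add_sub_cancel]
    ring

/-- Truncated Newton identity (closed form of the recursion defect):
for arbitrary reals `p 1, …, p r`, all `t ≥ 1` and `k ≥ 1`,
`∑_{i=1}^t (-1)^{i-1} a i * P (t+k-i) - P (t+k)
  = (-1)^{t-1} ∑_{|S| = t+1} ∑_{j ∈ S} p j ^ k * ∏_{i ∈ S, i ≠ j} p i`. -/
theorem truncated_newton_identity
    (r : ℕ) (p : Fin r → ℝ)
    (P : ℕ → ℝ) (hP : ∀ i, 1 ≤ i → P i = ∑ j, p j ^ i)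
    (a : ℕ → ℝ)
    (ha : ∀ n, a n = ∑ S ∈ Finset.powersetCard n (Finset.univ : Finset (Fin r)),
      ∏ j ∈ S, p j) :
    ∀ t k : ℕ, 1 ≤ t → 1 ≤ k →
      (∑ i ∈ Icc 1 t, (-1 : ℝ) ^ (i - 1) * a i * P (t + k - i)) - P (t + k) =
        (-1 : ℝ) ^ (t - 1) *
          ∑ S ∈ Finset.powersetCard (t + 1) (Finset.univ : Finset (Fin r)),
            ∑ j ∈ S, p j ^ k * ∏ i ∈ S.erase j, p i := by
  intro t k ht hk
  obtain ⟨t, rfl⟩ := Nat.exists_eq_add_of_le' ht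
  have hPi : ∀ i ∈ Icc 1 (t + 1), (-1 : ℝ) ^ (i - 1) * a i * P (t + 1 + k - i)
      = (-1) ^ (i - 1) * a i * ∑ j, p j ^ (t + 1 + k - i) := fun i hi => by
    rw [hP _ (by simp only [mem_Icc] at hi; omega)]
  rw [sum_congr rfl hPi, hP _ (by omega), Nat.add_sub_cancel]
  simp only [ha]
  exact sum_Icc_esymm_mul_powerSum_sub_powerSum p t k
end

section
/- Bound on the recursion defect: for all integers t ≥ 1 and k ≥ 1, |Σ_{i=1}^t (−1)^{i−1} a_i P_{t+k−i} − P_{t+k}| ≤ (t + 1) · a_{t+1}. -/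
/-!
Write `e_i` and `P_i` for the elementary symmetric and power sums of `p`, and
`T(t, k) = ∑_{|S| = t} (∏_{j ∈ S} p_j) ∑_{j ∉ S} p_j ^ k`. Splitting `P_k` over a `(t+1)`-set and
its complement gives `e_{t+1} P_k = T(t, k+1) + T(t+1, k)`, so the truncated Newton sum
`∑_{i ≤ t} (-1)^i e_i P_{t+k-i}` telescopes to `(-1)^t T(t, k)`, which is (up to sign) the
recursion defect. For `p_j ∈ [0, 1]`, `T(t, k)` is nonnegative and antitone in `k`, and
`T(t, 1) = (t+1) e_{t+1}` because every `(t+1)`-set arises from exactly `t+1` pairs `(S, j ∉ S)`.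
-/

open Finset

namespace Newton

variable {ι R : Type*} [Fintype ι]

section CommRing

variable [CommRing R] (p : ι → R)

def esymm (n : ℕ) : R := ∑ S ∈ powersetCard n univ, ∏ j ∈ S, p j

def psum (k : ℕ) : R := ∑ j, p j ^ k

theorem esymm_zero : esymm p 0 = 1 := by
  simp [esymm]

variable [DecidableEq ι]

def esymmPsumCompl (t k : ℕ) : R :=
  ∑ S ∈ powersetCard t univ, (∏ j ∈ S, p j) * ∑ j ∈ Sᶜ, p j ^ k

theorem esymmPsumCompl_zero_left (k : ℕ) : esymmPsumCompl p 0 k = psum p k := by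
  simp [esymmPsumCompl, psum]

theorem esymmPsumCompl_succ_right (t k : ℕ) :
    esymmPsumCompl p t (k + 1) =
      ∑ T ∈ powersetCard (t + 1) univ, (∏ j ∈ T, p j) * ∑ j ∈ T, p j ^ k := by
  simp only [esymmPsumCompl, mul_sum, sum_sigma']
  refine sum_nbij' (fun x => ⟨insert x.2 x.1, x.2⟩) (fun x => ⟨x.1.erase x.2, x.2⟩)
    ?_ ?_ ?_ ?_ ?_
  · rintro ⟨S, j⟩ hx
    simp only [mem_sigma, mem_powersetCard_univ, mem_compl] at hx
    simp [card_insert_of_notMem hx.2, hx.1]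
  · rintro ⟨T, j⟩ hx
    simp only [mem_sigma, mem_powersetCard_univ] at hx
    simp [card_erase_of_mem hx.2, hx.1]
  · rintro ⟨S, j⟩ hx
    simp only [mem_sigma, mem_powersetCard_univ, mem_compl] at hx
    simp [erase_insert hx.2]
  · rintro ⟨T, j⟩ hx
    simp only [mem_sigma, mem_powersetCard_univ] at hx
    simp [insert_erase hx.2]
  · rintro ⟨S, j⟩ hx
    simp only [mem_sigma, mem_powersetCard_univ, mem_compl] at hx
    simp only [prod_insert hx.2, pow_succ]
    ring

theorem esymmPsumCompl_one (t : ℕ) : esymmPsumCompl p t 1 = (t + 1) * esymm p (t + 1) := by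
  rw [esymmPsumCompl_succ_right, esymm, mul_sum]
  refine sum_congr rfl fun T hT => ?_
  rw [mem_powersetCard_univ] at hT
  simp [hT, mul_comm]

theorem esymm_succ_mul_psum (t k : ℕ) :
    esymm p (t + 1) * psum p k = esymmPsumCompl p t (k + 1) + esymmPsumCompl p (t + 1) k := by
  rw [esymmPsumCompl_succ_right, esymmPsumCompl, ← sum_add_distrib, esymm, psum, sum_mul]
  refine sum_congr rfl fun T _ => ?_
  rw [← sum_add_sum_compl T, mul_add]

theorem sum_range_neg_one_pow_mul_esymm_mul_psum (t k : ℕ) :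
    ∑ i ∈ range (t + 1), (-1) ^ i * esymm p i * psum p (t + k - i) =
      (-1) ^ t * esymmPsumCompl p t k := by
  induction t generalizing k with
  | zero => simp [esymm_zero, esymmPsumCompl_zero_left]
  | succ t ih =>
    have hshift : ∀ i ∈ range (t + 1), (-1) ^ i * esymm p i * psum p (t + 1 + k - i) =
        (-1) ^ i * esymm p i * psum p (t + (k + 1) - i) := fun i _ => by
      rw [show t + 1 + k - i = t + (k + 1) - i by omega]
    rw [sum_range_succ, sum_congr rfl hshift, ih, Nat.add_sub_cancel_left, pow_succ]
    linear_combination (-(-1) ^ t) * esymm_succ_mul_psum p t k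

theorem psum_sub_sum_Icc_esymm_mul_psum (t k : ℕ) :
    psum p (t + k) - ∑ i ∈ Icc 1 t, (-1) ^ (i - 1) * esymm p i * psum p (t + k - i) =
      (-1) ^ t * esymmPsumCompl p t k := by
  rw [← sum_range_neg_one_pow_mul_esymm_mul_psum, sum_range_succ', ← Ico_add_one_right_eq_Icc,
    sum_Ico_eq_sum_range, Nat.add_sub_cancel, sub_eq_neg_add, ← sum_neg_distrib]
  simp only [esymm_zero, pow_zero, one_mul, Nat.sub_zero, add_comm 1, Nat.add_sub_cancel,
    pow_succ, mul_neg_one, neg_mul]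

end CommRing

section OrderedRing

variable [CommRing R] [PartialOrder R] [IsOrderedRing R] [DecidableEq ι] {p : ι → R}

theorem esymmPsumCompl_nonneg (hp : ∀ j, 0 ≤ p j) (t k : ℕ) : 0 ≤ esymmPsumCompl p t k :=
  sum_nonneg fun _ _ => mul_nonneg (prod_nonneg fun j _ => hp j)
    (sum_nonneg fun j _ => pow_nonneg (hp j) k)

theorem esymmPsumCompl_antitone (hp₀ : ∀ j, 0 ≤ p j) (hp₁ : ∀ j, p j ≤ 1) (t : ℕ) :
    Antitone (esymmPsumCompl p t) := fun _ _ hkl =>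
  sum_le_sum fun _ _ => mul_le_mul_of_nonneg_left
    (sum_le_sum fun j _ => pow_le_pow_of_le_one (hp₀ j) (hp₁ j) hkl)
    (prod_nonneg fun j _ => hp₀ j)

end OrderedRing

end Newton

open Newton

theorem recursion_defect_bound_general
    (r : ℕ)
    (p : Fin r → ℝ) (hp : ∀ j, 0 ≤ p j) (hpsum : ∑ j, p j = 1)
    (P : ℕ → ℝ) (hP : ∀ i, 1 ≤ i → P i = ∑ j, p j ^ i)
    (a : ℕ → ℝ)
    (ha : ∀ n, a n = ∑ S ∈ Finset.powersetCard n (Finset.univ : Finset (Fin r)),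
      ∏ j ∈ S, p j) :
    ∀ t k : ℕ, 1 ≤ t → 1 ≤ k →
      |(∑ i ∈ Icc 1 t, (-1 : ℝ) ^ (i - 1) * a i * P (t + k - i)) - P (t + k)| ≤
        ((t : ℝ) + 1) * a (t + 1) := by
  intro t k _ hk
  have hp₁ : ∀ j, p j ≤ 1 := fun j => hpsum ▸ single_le_sum (fun i _ => hp i) (mem_univ j)
  have ha' : a = esymm p := funext ha
  have hP' : ∀ i, 1 ≤ i → P i = psum p i := hP
  have hsum : ∑ i ∈ Icc 1 t, (-1 : ℝ) ^ (i - 1) * a i * P (t + k - i) =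
      ∑ i ∈ Icc 1 t, (-1) ^ (i - 1) * esymm p i * psum p (t + k - i) :=
    sum_congr rfl fun i hi => by
      rw [ha', hP' _ (by simp only [mem_Icc] at hi; omega)]
  rw [hsum, hP' _ (by omega), ← neg_sub, abs_neg, psum_sub_sum_Icc_esymm_mul_psum, abs_mul,
    abs_neg_one_pow, one_mul, abs_of_nonneg (esymmPsumCompl_nonneg hp t k), ha',
    ← esymmPsumCompl_one]
  exact esymmPsumCompl_antitone hp hp₁ t hk

/-- Bound on the recursion defect: for eigenvalues on the probability
simplex, all `t ≥ 1` and `k ≥ 1`,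
`|∑_{i=1}^t (-1)^{i-1} a i * P (t+k-i) - P (t+k)| ≤ (t+1) * a (t+1)`. -/
theorem recursion_defect_bound
    (r : ℕ) (hr : 1 ≤ r)
    (p : Fin r → ℝ) (hp : ∀ j, 0 ≤ p j) (hpsum : ∑ j, p j = 1)
    (P : ℕ → ℝ) (hP : ∀ i, 1 ≤ i → P i = ∑ j, p j ^ i)
    (a : ℕ → ℝ)
    (ha : ∀ n, a n = ∑ S ∈ Finset.powersetCard n (Finset.univ : Finset (Fin r)),
      ∏ j ∈ S, p j) :
    ∀ t k : ℕ, 1 ≤ t → 1 ≤ k →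
      |(∑ i ∈ Icc 1 t, (-1 : ℝ) ^ (i - 1) * a i * P (t + k - i)) - P (t + k)| ≤
        ((t : ℝ) + 1) * a (t + 1) :=
  recursion_defect_bound_general r p hp hpsum P hP a ha
end

section
/- Weighted bound on the recursion defect: for all integers t ≥ 1 and k ≥ 1, |Σ_{i=1}^t (−1)^{i−1} a_i P_{t+k−i,M} − P_{t+k,M}| ≤ (t + 1) · C · a_{t+1}. -/
/-!
For a root `x` of the multiset `s`, the recursion `e_{i+1}(s) = e_{i+1}(s - x) + x e_i(s - x)`
makes the truncated alternating sum `∑_{i ≤ t} (-1)^i e_i(s) x^(t+1-i)` telescope to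
`(-1)^t e_t(s - x) x`. So the recursion defect of `n ↦ ∑_j m_j p_j^n` is
`-(-1)^t ∑_j m_j p_j^k e_t(p - p_j)`, and since `0 ≤ p_j ≤ 1` its absolute value is at most
`C ∑_j p_j e_t(p - p_j) = (t + 1) C e_{t+1}(p)`, the last step counting each `(t+1)`-subset once
per element.
-/

open Finset

namespace Multiset

variable {R : Type*}

theorem esymm_cons_succ_s15 [CommSemiring R] (a : R) (s : Multiset R) (n : ℕ) :
    (a ::ₘ s).esymm (n + 1) = s.esymm (n + 1) + a * s.esymm n := by
  simp [esymm, map_map, sum_map_mul_left]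

theorem esymm_nonneg [CommSemiring R] [PartialOrder R] [IsOrderedRing R] {s : Multiset R}
    (hs : ∀ x ∈ s, 0 ≤ x) (n : ℕ) : 0 ≤ s.esymm n :=
  sum_nonneg fun _ ht ↦ by
    obtain ⟨u, hu, rfl⟩ := mem_map.1 ht
    exact prod_nonneg fun x hx ↦ hs x (mem_of_le (mem_powersetCard.1 hu).1 hx)

theorem sum_range_alternating_esymm_cons_mul_pow [CommRing R] (a : R) (s : Multiset R) (t : ℕ) :
    ∑ i ∈ Finset.range (t + 1), (-1) ^ i * (a ::ₘ s).esymm i * a ^ (t + 1 - i) =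
      (-1) ^ t * s.esymm t * a := by
  induction t with
  | zero => simp [esymm]
  | succ t ih =>
    rw [sum_range_succ, Nat.add_sub_cancel_left, pow_one, esymm_cons_succ_s15]
    have hshift :
        ∑ i ∈ Finset.range (t + 1), (-1) ^ i * (a ::ₘ s).esymm i * a ^ (t + 1 + 1 - i) =
        (∑ i ∈ Finset.range (t + 1), (-1) ^ i * (a ::ₘ s).esymm i * a ^ (t + 1 - i)) * a := by
      rw [sum_mul]
      refine sum_congr rfl fun i hi ↦ ?_
      rw [show t + 1 + 1 - i = t + 1 - i + 1 by grind [mem_range], pow_succ]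
      ring
    rw [hshift, ih]
    ring

theorem sum_map_mul_esymm_erase [CommSemiring R] [DecidableEq R] (s : Multiset R) (t : ℕ) :
    (s.map fun x ↦ x * (s.erase x).esymm t).sum = (t + 1) * s.esymm (t + 1) := by
  induction s using Multiset.induction_on generalizing t with
  | empty => simp [esymm, powersetCard_zero_right]
  | cons a s ih =>
    have herase : ∀ x ∈ s, (a ::ₘ s).erase x = a ::ₘ s.erase x := fun x hx ↦
      erase_cons_tail_of_mem hx
    rw [map_cons, sum_cons, erase_cons_head, map_congr rfl fun x hx ↦ by rw [herase x hx]]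
    cases t with
    | zero => simp [esymm, powersetCard_one, map_map, add_comm]
    | succ t =>
      simp only [esymm_cons_succ_s15, mul_add, sum_map_add, ← mul_assoc, mul_comm _ a]
      simp only [mul_assoc, sum_map_mul_left, ih]
      push_cast
      ring

end Multiset

theorem Finset.sum_Icc_one_neg_one_pow_pred_mul {R : Type*} [CommRing R] (g : ℕ → R) (t : ℕ) :
    ∑ i ∈ Icc 1 t, (-1) ^ (i - 1) * g i = g 0 - ∑ i ∈ range (t + 1), (-1) ^ i * g i := by
  rw [range_eq_Ico, sum_eq_sum_Ico_succ_bot (by omega : 0 < t + 1), zero_add,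
    Ico_add_one_right_eq_Icc, pow_zero, one_mul, sub_add_cancel_left, ← sum_neg_distrib]
  refine sum_congr rfl fun i hi ↦ ?_
  obtain ⟨j, rfl⟩ := Nat.exists_eq_add_of_le' (mem_Icc.1 hi).1
  simp [pow_succ]

section RecursionDefect

variable {R : Type*} [CommRing R]

/-- The failure of Newton's recursion, truncated at order `t`, at index `t + k`: for
`e = s.esymm` and `P` a power sum over `s` it vanishes once `card s ≤ t`. -/
def recursionDefect (e P : ℕ → R) (t k : ℕ) : R :=
  ∑ i ∈ Icc 1 t, (-1) ^ (i - 1) * e i * P (t + k - i) - P (t + k)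

theorem recursionDefect_congr {e P Q : ℕ → R} {t k : ℕ} (h : ∀ n, k ≤ n → P n = Q n) :
    recursionDefect e P t k = recursionDefect e Q t k := by
  unfold recursionDefect
  rw [sum_congr rfl fun i hi ↦ by rw [h _ (by grind)], h _ (by omega)]

theorem recursionDefect_sum_mul {ι : Type*} (s : Finset ι) (c : ι → R) (f : ι → ℕ → R)
    (e : ℕ → R) (t k : ℕ) :
    recursionDefect e (fun n ↦ ∑ j ∈ s, c j * f j n) t k =
      ∑ j ∈ s, c j * recursionDefect e (f j) t k := by
  simp only [recursionDefect, mul_sub, sum_sub_distrib, mul_sum]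
  rw [sum_comm]
  congr 1
  exact sum_congr rfl fun i _ ↦ sum_congr rfl fun j _ ↦ by ring

theorem Multiset.recursionDefect_esymm_pow [DecidableEq R] {s : Multiset R} {x : R} (hx : x ∈ s)
    {k : ℕ} (hk : k ≠ 0) (t : ℕ) :
    recursionDefect s.esymm (x ^ ·) t k = -((-1) ^ t * (s.erase x).esymm t * x ^ k) := by
  have hrange : ∑ i ∈ Finset.range (t + 1), (-1) ^ i * (s.esymm i * x ^ (t + k - i)) =
      (-1) ^ t * (s.erase x).esymm t * x ^ k := by
    have key := sum_range_alternating_esymm_cons_mul_pow x (s.erase x) t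
    rw [cons_erase hx] at key
    obtain ⟨k, rfl⟩ := Nat.exists_eq_add_of_le' (Nat.one_le_iff_ne_zero.2 hk)
    rw [pow_succ', ← mul_assoc, ← key, sum_mul]
    refine sum_congr rfl fun i hi ↦ ?_
    rw [show t + (k + 1) - i = t + 1 - i + k by grind [mem_range], pow_add]
    ring
  simp only [recursionDefect, mul_assoc, sum_Icc_one_neg_one_pow_pred_mul
    (fun i ↦ s.esymm i * x ^ (t + k - i)), hrange]
  simp [esymm]

theorem Multiset.abs_mul_recursionDefect_esymm_pow_le [LinearOrder R] [IsStrictOrderedRing R]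
    [DecidableEq R] {s : Multiset R} (hs : ∀ y ∈ s, 0 ≤ y) {x : R}
    (hx : x ∈ s) (hx1 : x ≤ 1) {c C : R} (hc : |c| ≤ C) {k : ℕ} (hk : k ≠ 0) (t : ℕ) :
    |c * recursionDefect s.esymm (x ^ ·) t k| ≤ C * (x * (s.erase x).esymm t) := by
  have hx0 := hs x hx
  have he := esymm_nonneg (s := s.erase x) (fun y hy ↦ hs y (mem_of_mem_erase hy)) t
  rw [recursionDefect_esymm_pow hx hk, abs_mul, abs_neg, abs_mul, abs_mul, abs_pow, abs_neg,
    abs_one, one_pow, one_mul, abs_of_nonneg he, abs_of_nonneg (pow_nonneg hx0 k), mul_comm x]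
  exact mul_le_mul hc (by gcongr; exact pow_le_of_le_one hx0 hx1 hk)
    (mul_nonneg he (pow_nonneg hx0 k)) ((abs_nonneg c).trans hc)

end RecursionDefect

theorem weighted_recursion_defect_bound_general
    (r : ℕ) (C : ℝ)
    (p : Fin r → ℝ) (hp : ∀ j, 0 ≤ p j) (hpsum : ∑ j, p j = 1)
    (m : Fin r → ℝ) (hm : ∀ j, |m j| ≤ C)
    (PM : ℕ → ℝ) (hPM : ∀ i, 1 ≤ i → PM i = ∑ j, m j * p j ^ i)
    (a : ℕ → ℝ)
    (ha : ∀ n, a n = ∑ S ∈ Finset.powersetCard n (Finset.univ : Finset (Fin r)),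
      ∏ j ∈ S, p j) :
    ∀ t k : ℕ, 1 ≤ t → 1 ≤ k →
      |(∑ i ∈ Icc 1 t, (-1 : ℝ) ^ (i - 1) * a i * PM (t + k - i)) - PM (t + k)| ≤
        ((t : ℝ) + 1) * C * a (t + 1) := by
  classical
  intro t k _ hk
  set s : Multiset ℝ := univ.val.map p
  have ha_esymm : a = s.esymm := funext fun n ↦ by rw [ha, Finset.esymm_map_val]
  have hs : ∀ x ∈ s, 0 ≤ x := by simp [s, hp]
  have hp1 : ∀ j, p j ≤ 1 := fun j ↦ hpsum ▸ single_le_sum (fun i _ ↦ hp i) (mem_univ j)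
  change |recursionDefect a PM t k| ≤ _
  rw [recursionDefect_congr fun n hn ↦ hPM n (hk.trans hn), recursionDefect_sum_mul, ha_esymm]
  calc |∑ j, m j * recursionDefect s.esymm (p j ^ ·) t k|
      ≤ ∑ j, C * (p j * (s.erase (p j)).esymm t) :=
        (abs_sum_le_sum_abs _ _).trans <| sum_le_sum fun j _ ↦
          Multiset.abs_mul_recursionDefect_esymm_pow_le hs (Multiset.mem_map_of_mem p (mem_univ j))
            (hp1 j) (hm j) (by omega) t
    _ = C * (s.map fun x ↦ x * (s.erase x).esymm t).sum := by
        rw [← mul_sum, Multiset.map_map, Finset.sum_map_val]; rfl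
    _ = ((t : ℝ) + 1) * C * s.esymm (t + 1) := by
        rw [Multiset.sum_map_mul_esymm_erase]; ring

/-- Weighted bound on the recursion defect: with weighted power sums
`PM i = ∑ j, m j * p j ^ i` (weights `|m j| ≤ C`), for all `t ≥ 1` and
`k ≥ 1`, `|∑_{i=1}^t (-1)^{i-1} a i * PM (t+k-i) - PM (t+k)| ≤ (t+1) C a (t+1)`. -/
theorem weighted_recursion_defect_bound
    (r : ℕ) (hr : 1 ≤ r) (C : ℝ) (hC : 0 < C)
    (p : Fin r → ℝ) (hp : ∀ j, 0 ≤ p j) (hpsum : ∑ j, p j = 1)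
    (m : Fin r → ℝ) (hm : ∀ j, |m j| ≤ C)
    (PM : ℕ → ℝ) (hPM : ∀ i, 1 ≤ i → PM i = ∑ j, m j * p j ^ i)
    (a : ℕ → ℝ)
    (ha : ∀ n, a n = ∑ S ∈ Finset.powersetCard n (Finset.univ : Finset (Fin r)),
      ∏ j ∈ S, p j) :
    ∀ t k : ℕ, 1 ≤ t → 1 ≤ k →
      |(∑ i ∈ Icc 1 t, (-1 : ℝ) ^ (i - 1) * a i * PM (t + k - i)) - PM (t + k)| ≤
        ((t : ℝ) + 1) * C * a (t + 1) :=
  weighted_recursion_defect_bound_general r C p hp hpsum m hm PM hPM a ha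
end
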